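/- Every fixed point of a primitive substitution over a finite alphabet is uniformly recurrent: if σ : Σ → Σ⁺ is a substitution such that for some k ≥ 1 every letter of Σ occurs in σ^k(b) for every b ∈ Σ, and u is an infinite word with σ(u) = u, then every factor of u occurs in u with bounded gaps. -/

import Mathlib

/-- Partial sums of a sequence of run lengths. -/
def partialSum (t : ℕ → ℕ) : ℕ → ℕ
  | 0 => 0
  | k + 1 => partialSum t k + t k

/-- The `k`-th iterate `σ^k(b)` of a substitution `s` applied to a letter. -/
def substIter {α : Type*} (s : α → List α) : ℕ → α → List α
  | 0, b => [b]
  | k + 1, b => ((substIter s k b).map s).flatten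

/-- `u` is a fixed point of the substitution `s`, i.e.
`u = s(u 0) s(u 1) s(u 2) ⋯`. -/
def SubstFix {α : Type*} (s : α → List α) (u : ℕ → α) : Prop :=
  ∀ i k, (h : k < (s (u i)).length) →
    u (partialSum (fun j => (s (u j)).length) i + k) = (s (u i)).get ⟨k, h⟩

/-- The finite word `f` occurs in `w` at position `p`. -/
def factorAt {α : Type*} (w : ℕ → α) (p : ℕ) (f : List α) : Prop :=
  List.ofFn (fun j : Fin f.length => w (p + j)) = f

/-- `w` is uniformly recurrent: every factor occurs with bounded gaps. -/
def UniformlyRecurrent {α : Type*} (w : ℕ → α) : Prop :=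
  ∀ f : List α, (∃ p, factorAt w p f) →
    ∃ N, ∀ p, ∃ q, p ≤ q ∧ q ≤ p + N ∧ factorAt w q f

/-!
For every `m`, the fixed point `u` is the concatenation of the level-`m` blocks
`σ^m(u 0) σ^m(u 1) ⋯`, each of length at most `M = max_b |σ^m(b)|`, so every window of length `M`
of `u` contains the start of a block. When `|Σ| ≥ 2`, primitivity gives `|σ^{nk}(b)| ≥ |Σ|^n`, so a
factor `f` of `u` lies in a long prefix `σ^m(u 0)` of `u`, hence in `σ^{m+k}(b)` for every letter
`b`, since `u 0` occurs in `σ^k(b)`. At level `m + k`, every window of length `2M` of `u` therefore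
contains `f`.
-/

section Factors

variable {α : Type*} {w : ℕ → α}

lemma factorAt_iff_map_range' {p : ℕ} {f : List α} :
    factorAt w p f ↔ (List.range' p f.length).map w = f := by
  have hwindow : List.ofFn (fun j : Fin f.length => w (p + j)) =
      (List.range' p f.length).map w := List.ext_getElem (by simp) fun _ _ _ => by simp
  rw [factorAt, hwindow]

lemma factorAt_singleton (p : ℕ) : factorAt w p [w p] := by
  simp [factorAt_iff_map_range']

lemma factorAt_append_iff {a : ℕ} {v x : List α} :
    factorAt w a (v ++ x) ↔ factorAt w a v ∧ factorAt w (a + v.length) x := by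
  simp only [factorAt_iff_map_range', List.length_append, ← List.range'_append_1,
    List.map_append]
  constructor
  · intro h
    exact List.append_inj h (by simp)
  · rintro ⟨hv, hx⟩
    rw [hv, hx]

lemma factorAt_cons_iff {a : ℕ} {c : α} {v : List α} :
    factorAt w a (c :: v) ↔ w a = c ∧ factorAt w (a + 1) v := by
  simp [factorAt_iff_map_range', List.range'_succ]

lemma List.IsInfix.exists_factorAt {f l : List α} {a : ℕ} (hfl : f <:+: l)
    (hl : factorAt w a l) : ∃ o, o + f.length ≤ l.length ∧ factorAt w (a + o) f := by
  obtain ⟨t, x, rfl⟩ := hfl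
  refine ⟨t.length, by simp, ?_⟩
  exact (factorAt_append_iff.1 (factorAt_append_iff.1 hl).1).2

lemma isInfix_of_factorAt {f l : List α} {a o : ℕ} (hl : factorAt w a l)
    (hf : factorAt w (a + o) f) (hlen : o + f.length ≤ l.length) : f <:+: l := by
  rw [factorAt_iff_map_range'] at hl hf
  have hwindow : (l.drop o).take f.length = f := by
    conv_rhs => rw [← hf]
    rw [← hl, ← List.map_drop, ← List.map_take, List.drop_range',
      List.take_range'_of_length_ge (by omega)]
    simp
  rw [← hwindow]
  exact (List.take_prefix _ _).isInfix.trans (List.drop_suffix _ _).isInfix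

end Factors

lemma exists_apply_mem_Icc_of_step_le {g : ℕ → ℕ} {M : ℕ} (h0 : g 0 = 0)
    (hstep : ∀ i, g (i + 1) ≤ g i + M) (hunbounded : ∀ P, ∃ i, P ≤ g i) (P : ℕ) :
    ∃ i, P ≤ g i ∧ g i ≤ P + M := by
  classical
  have hex := hunbounded P
  refine ⟨Nat.find hex, Nat.find_spec hex, ?_⟩
  match hi : Nat.find hex with
  | 0 => rw [h0]; omega
  | i + 1 =>
    have hbefore : ¬ P ≤ g i := Nat.find_min hex (by omega)
    have := hstep i
    omega

lemma uniformlyRecurrent_of_subsingleton {α : Type*} [Subsingleton α] (w : ℕ → α) :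
    UniformlyRecurrent w := fun f _ =>
  ⟨0, fun p => ⟨p, le_rfl, le_self_add, by
    rw [factorAt_iff_map_range']
    exact List.ext_getElem (by simp) fun _ _ _ => Subsingleton.elim _ _⟩⟩

lemma Fintype.card_le_length_of_forall_mem {α : Type*} [Fintype α] {l : List α}
    (h : ∀ a, a ∈ l) : Fintype.card α ≤ l.length := by
  classical
  calc Fintype.card α = (Finset.univ : Finset α).card := Finset.card_univ.symm
    _ ≤ l.toFinset.card := Finset.card_le_card fun a _ => List.mem_toFinset.2 (h a)
    _ ≤ l.length := List.toFinset_card_le l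

section Substitution

variable {α : Type*} {s : α → List α}

lemma substIter_succ (m : ℕ) (b : α) : substIter s (m + 1) b = (substIter s m b).flatMap s :=
  rfl

lemma substIter_add (a c : ℕ) (b : α) :
    substIter s (a + c) b = (substIter s c b).flatMap (substIter s a) := by
  induction a with
  | zero =>
    rw [Nat.zero_add]
    exact (List.flatMap_singleton' _).symm
  | succ a ih =>
    rw [Nat.add_right_comm, substIter_succ, ih, List.flatMap_assoc]
    rfl

lemma length_substIter_pos (hne : ∀ b, s b ≠ []) (m : ℕ) (b : α) :
    0 < (substIter s m b).length := by
  induction m with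
  | zero => simp [substIter]
  | succ m ih =>
    obtain ⟨c, l, hcl⟩ := List.exists_cons_of_length_pos ih
    rw [substIter_succ, hcl, List.flatMap_cons, List.length_append]
    exact Nat.lt_add_right _ (List.length_pos_iff.2 (hne c))

lemma pow_le_length_substIter_mul {k c : ℕ} (hc : ∀ b, c ≤ (substIter s k b).length) (n : ℕ)
    (b : α) : c ^ n ≤ (substIter s (n * k) b).length := by
  induction n generalizing b with
  | zero => simp [substIter]
  | succ n ih =>
    rw [Nat.succ_mul, substIter_add, List.length_flatMap, pow_succ']
    calc c * c ^ n ≤ (substIter s k b).length * c ^ n := Nat.mul_le_mul_right _ (hc b)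
      _ = ((substIter s k b).map fun x => c ^ n).sum := by simp
      _ ≤ _ := List.sum_le_sum fun x _ => ih x

lemma partialSum_add_length_of_factorAt {u : ℕ → α} {v : List α} {a : ℕ}
    (hv : factorAt u a v) :
    partialSum (fun j => (s (u j)).length) (a + v.length) =
      partialSum (fun j => (s (u j)).length) a + (v.flatMap s).length := by
  induction v generalizing a with
  | nil => rfl
  | cons c v ih =>
    obtain ⟨rfl, hv'⟩ := factorAt_cons_iff.1 hv
    rw [List.length_cons, ← Nat.add_assoc, Nat.add_right_comm, ih hv', List.flatMap_cons,
      List.length_append, ← Nat.add_assoc]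
    rfl

end Substitution

/-- Start position in a fixed point `u` of the level-`m` block `σ^m(u i)`. -/
def blockStart {α : Type*} (s : α → List α) (u : ℕ → α) : ℕ → ℕ → ℕ
  | 0, i => i
  | m + 1, i => partialSum (fun j => (s (u j)).length) (blockStart s u m i)

lemma blockStart_apply_zero {α : Type*} (s : α → List α) (u : ℕ → α) (m : ℕ) :
    blockStart s u m 0 = 0 := by
  induction m with
  | zero => rfl
  | succ m ih => simp only [blockStart, ih, partialSum]

namespace SubstFix

variable {α : Type*} {s : α → List α} {u : ℕ → α} (hfix : SubstFix s u)
include hfix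

lemma factorAt_partialSum (i : ℕ) :
    factorAt u (partialSum (fun j => (s (u j)).length) i) (s (u i)) := by
  unfold factorAt
  exact List.ext_getElem (by simp) fun j _ hj => by simpa using hfix i j hj

lemma factorAt_flatMap {v : List α} {a : ℕ} (hv : factorAt u a v) :
    factorAt u (partialSum (fun j => (s (u j)).length) a) (v.flatMap s) := by
  induction v generalizing a with
  | nil => simp [factorAt_iff_map_range']
  | cons c v ih =>
    obtain ⟨rfl, hv'⟩ := factorAt_cons_iff.1 hv
    rw [List.flatMap_cons, factorAt_append_iff]
    exact ⟨hfix.factorAt_partialSum a, ih (a := a + 1) hv'⟩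

lemma factorAt_blockStart (m i : ℕ) : factorAt u (blockStart s u m i) (substIter s m (u i)) := by
  induction m with
  | zero => exact factorAt_singleton i
  | succ m ih => exact hfix.factorAt_flatMap ih

lemma blockStart_succ (m i : ℕ) :
    blockStart s u m (i + 1) = blockStart s u m i + (substIter s m (u i)).length := by
  induction m with
  | zero => rfl
  | succ m ih =>
    simp only [blockStart]
    rw [ih, partialSum_add_length_of_factorAt (hfix.factorAt_blockStart m i)]
    rfl

lemma le_blockStart (hne : ∀ b, s b ≠ []) (m i : ℕ) : i ≤ blockStart s u m i := by
  induction i with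
  | zero => exact Nat.zero_le _
  | succ i ih =>
    rw [hfix.blockStart_succ]
    have := length_substIter_pos hne m (u i)
    omega

lemma uniformlyRecurrent_of_forall_isInfix [Fintype α] (hne : ∀ b, s b ≠ [])
    (h : ∀ f : List α, (∃ p, factorAt u p f) → ∃ m, ∀ b, f <:+: substIter s m b) :
    UniformlyRecurrent u := by
  intro f hf
  obtain ⟨m, hm⟩ := h f hf
  set M := Finset.univ.sup fun b => (substIter s m b).length
  have hM (b : α) : (substIter s m b).length ≤ M :=
    Finset.le_sup (f := fun b => (substIter s m b).length) (Finset.mem_univ b)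
  refine ⟨2 * M, fun P => ?_⟩
  obtain ⟨i, hPi, hiP⟩ := exists_apply_mem_Icc_of_step_le (blockStart_apply_zero s u m)
    (fun i => (hfix.blockStart_succ m i).trans_le (Nat.add_le_add_left (hM (u i)) _))
    (fun P => ⟨P, hfix.le_blockStart hne m P⟩) P
  obtain ⟨o, ho, hfo⟩ := (hm (u i)).exists_factorAt (hfix.factorAt_blockStart m i)
  exact ⟨blockStart s u m i + o, by omega, by linarith [hM (u i)], hfo⟩

lemma exists_forall_isInfix_substIter [Fintype α] [Nontrivial α] {k : ℕ}
    (hk : ∀ b c : α, c ∈ substIter s k b) {f : List α} {p : ℕ} (hf : factorAt u p f) :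
    ∃ m, ∀ b, f <:+: substIter s m b := by
  have hgrow := pow_le_length_substIter_mul
    (fun b => Fintype.card_le_length_of_forall_mem (hk b)) (p + f.length) (u 0)
  have hlong : p + f.length ≤ (substIter s ((p + f.length) * k) (u 0)).length :=
    (Nat.lt_pow_self Fintype.one_lt_card).le.trans hgrow
  have hprefix := hfix.factorAt_blockStart ((p + f.length) * k) 0
  rw [blockStart_apply_zero] at hprefix
  refine ⟨(p + f.length) * k + k, fun b => ?_⟩
  rw [substIter_add]
  exact (isInfix_of_factorAt hprefix (by simpa using hf) hlong).trans
    (List.infix_of_mem_flatten (List.mem_map_of_mem (hk b (u 0))))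

end SubstFix

/-- Every fixed point of a primitive substitution over a finite alphabet is
uniformly recurrent. -/
theorem stmt19 {α : Type*} [Fintype α] (s : α → List α)
    (hne : ∀ b, s b ≠ [])
    (hprim : ∃ k, 1 ≤ k ∧ ∀ b c : α, c ∈ substIter s k b)
    (u : ℕ → α) (hfix : SubstFix s u) :
    UniformlyRecurrent u := by
  obtain ⟨k, -, hk⟩ := hprim
  rcases subsingleton_or_nontrivial α with _ | _
  · exact uniformlyRecurrent_of_subsingleton u
  · exact hfix.uniformlyRecurrent_of_forall_isInfix hne fun f ⟨p, hf⟩ =>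
      hfix.exists_forall_isInfix_substIter hk hf
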